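/- arXiv:2505.02196 — 3 statements merged into one kernel-verified Lean document; each statement's English description precedes it below -/
import Mathlib

section
/- Let p, K, a > 0 with pK/a < 2/π, and let b_1 ≥ a/2 − πpK/4. Then there exists C > 0 satisfying C = ((pKC + b_1)/a)·(arcsin(a/(2(pKC + b_1))) + (a/(2(pKC + b_1)))·√(1 − (a/(2(pKC + b_1)))²)), i.e., the continuum-limit synchronized solution exists. -/
open Real

/-!
Substituting `η = a / (2 (p K C + b₁))` turns the equation into `C = S η / (2 η)` together with
`p K · S η + 2 η b₁ = a`, where `S η = arcsin η + η √(1 - η²)`. The left-hand side of the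
latter is continuous in `η`, equals `0` at `η = 0` and `p K π / 2 + 2 b₁ ≥ a` at `η = 1`, so the
intermediate value theorem yields a root `η ∈ (0, 1]`, and `C = S η / (2 η)` is positive.
-/

/-- Twice the area of the part of the unit disk's upper half lying over `[0, η]`. -/
noncomputable def arcsinAddMulSqrt (η : ℝ) : ℝ := arcsin η + η * √(1 - η ^ 2)

theorem continuous_arcsinAddMulSqrt : Continuous arcsinAddMulSqrt := by
  unfold arcsinAddMulSqrt
  fun_prop

@[simp]
theorem arcsinAddMulSqrt_zero : arcsinAddMulSqrt 0 = 0 := by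
  simp [arcsinAddMulSqrt]

@[simp]
theorem arcsinAddMulSqrt_one : arcsinAddMulSqrt 1 = π / 2 := by
  simp [arcsinAddMulSqrt]

theorem arcsinAddMulSqrt_pos {η : ℝ} (hη : 0 < η) : 0 < arcsinAddMulSqrt η :=
  add_pos_of_pos_of_nonneg (arcsin_pos.mpr hη) (mul_nonneg hη.le (sqrt_nonneg _))

theorem exists_pos_mul_arcsinAddMulSqrt_add_eq {k a b : ℝ} (ha : 0 < a)
    (hb : a ≤ k * (π / 2) + 2 * b) :
    ∃ η, 0 < η ∧ k * arcsinAddMulSqrt η + 2 * η * b = a := by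
  set g : ℝ → ℝ := fun η => k * arcsinAddMulSqrt η + 2 * η * b
  have hg : ContinuousOn g (Set.Icc 0 1) :=
    (continuous_const.mul continuous_arcsinAddMulSqrt |>.add (by fun_prop)).continuousOn
  have hmem : a ∈ Set.Icc (g 0) (g 1) := ⟨by simp [g, ha.le], by simpa [g] using hb⟩
  obtain ⟨η, ⟨hη0, -⟩, hη⟩ := intermediate_value_Icc zero_le_one hg hmem
  refine ⟨η, hη0.lt_of_ne ?_, hη⟩
  rintro rfl
  simp only [g, arcsinAddMulSqrt_zero, mul_zero, zero_mul, add_zero] at hη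
  exact ha.ne hη

theorem eq_selfConsistent_of_mul_arcsinAddMulSqrt_add_eq {k a b η C : ℝ} (ha : 0 < a) (hη : 0 < η)
    (h : k * arcsinAddMulSqrt η + 2 * η * b = a)
    (hC : 2 * η * C = arcsinAddMulSqrt η) :
    C = ((k * C + b) / a) *
      (arcsin (a / (2 * (k * C + b))) +
        (a / (2 * (k * C + b))) * √(1 - (a / (2 * (k * C + b))) ^ 2)) := by
  have hkC : k * C + b = a / (2 * η) := by
    field_simp
    linear_combination k * hC + h
  have hratio : a / (2 * (k * C + b)) = η := by
    rw [hkC]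
    field_simp
  rw [hratio, ← arcsinAddMulSqrt, hkC, ← hC]
  field_simp

theorem exists_C_continuum_limit_general
    (p K a b1 : ℝ) (ha : 0 < a)
    (hb1 : a / 2 - Real.pi * p * K / 4 ≤ b1) :
    ∃ C > (0 : ℝ),
      C = ((p * K * C + b1) / a) *
        (Real.arcsin (a / (2 * (p * K * C + b1)))
          + (a / (2 * (p * K * C + b1))) *
            Real.sqrt (1 - (a / (2 * (p * K * C + b1))) ^ 2)) := by
  obtain ⟨η, hη, hroot⟩ :=
    exists_pos_mul_arcsinAddMulSqrt_add_eq (k := p * K) (b := b1) ha (by linarith)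
  exact ⟨arcsinAddMulSqrt η / (2 * η), div_pos (arcsinAddMulSqrt_pos hη) (by positivity),
    eq_selfConsistent_of_mul_arcsinAddMulSqrt_add_eq ha hη hroot
      (mul_div_cancel₀ _ (by positivity))⟩

/-- Existence of the continuum-limit synchronized solution: for pK/a < 2/π and
b₁ ≥ a/2 − πpK/4 there exists C > 0 satisfying the self-consistency equation. -/
theorem exists_C_continuum_limit
    (p K a b1 : ℝ) (hp : 0 < p) (hK : 0 < K) (ha : 0 < a)
    (hratio : p * K / a < 2 / Real.pi)
    (hb1 : a / 2 - Real.pi * p * K / 4 ≤ b1) :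
    ∃ C > (0 : ℝ),
      C = ((p * K * C + b1) / a) *
        (Real.arcsin (a / (2 * (p * K * C + b1)))
          + (a / (2 * (p * K * C + b1))) *
            Real.sqrt (1 - (a / (2 * (p * K * C + b1))) ^ 2)) :=
  exists_C_continuum_limit_general p K a b1 ha hb1
end

section
/- Let U(x) = arcsin(a(x − 1/2)/(pKC + b_1)) for x ∈ [0,1], where a, p, K, C, b_1 > 0 satisfy a/2 ≤ pKC + b_1. Then ∫₀¹ sin(U(x)) dx = 0, and the function u(t,x) = U(x) + V_1·t + V_0 satisfies, for the frequency function ω(x) = a(x − 1/2) and b_0 = V_1, the continuum-limit equation ∂u/∂t = ω(x) + pK·∫₀¹ sin(u(t,y) − u(t,x)) dy + b_1·sin(V(t) − u(t,x)) + b_0, provided C = ∫₀¹ cos(U(y)) dy. -/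
open Real intervalIntegral

/-!
`U` is odd about `x = 1/2` because `arcsin` is odd, so `∫₀¹ sin U = 0`. Expanding
`sin (U y - U x)` then collapses the coupling integral to `-C sin U(x)`, and on `[0, 1]`
the bound `a/2 ≤ pKC + b₁` puts the argument of `arcsin` in `[-1, 1]`, so
`(pKC + b₁) sin U(x) = a(x - 1/2)` cancels the frequency `ω(x)`. What is left on the right
is `b₀ = V₁ = ∂ₜu`.
-/

theorem intervalIntegral.integral_eq_zero_of_antisymm_about_midpoint {f : ℝ → ℝ} {a b : ℝ}
    (hf : ∀ x, f (a + b - x) = -f x) : ∫ x in a..b, f x = 0 := by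
  have h := integral_comp_sub_left f (a + b) (a := a) (b := b)
  simp only [hf, integral_neg, add_sub_cancel_left, add_sub_cancel_right] at h
  linarith

theorem intervalIntegral.integral_sin_sub_const {f : ℝ → ℝ} (hf : Continuous f) (a b θ : ℝ) :
    ∫ y in a..b, sin (f y - θ) =
      (∫ y in a..b, sin (f y)) * cos θ - (∫ y in a..b, cos (f y)) * sin θ := by
  simp_rw [sin_sub]
  rw [integral_sub
      ((by fun_prop : Continuous fun y => sin (f y) * cos θ).intervalIntegrable a b)
      ((by fun_prop : Continuous fun y => cos (f y) * sin θ).intervalIntegrable a b),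
    integral_mul_const, integral_mul_const]

theorem Real.sin_arcsin_mul_sub_half_div {a D x : ℝ} (ha : 0 < a) (hD : a / 2 ≤ D)
    (hx : x ∈ Set.Icc (0 : ℝ) 1) : sin (arcsin (a * (x - 1 / 2) / D)) = a * (x - 1 / 2) / D := by
  have hDpos : 0 < D := by linarith
  apply sin_arcsin
  · rw [le_div_iff₀ hDpos]
    nlinarith [hx.1, hx.2]
  · rw [div_le_one hDpos]
    nlinarith [hx.1, hx.2]

theorem continuum_limit_synchronized_solution_general
    (a p K C b1 V1 V0 b0 : ℝ)
    (ha : 0 < a)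
    (hbound : a / 2 ≤ p * K * C + b1) (hb0 : b0 = V1)
    (V : ℝ → ℝ) (hV : ∀ t, V t = V1 * t + V0)
    (ω : ℝ → ℝ) (hω : ∀ x, ω x = a * (x - 1 / 2))
    (U : ℝ → ℝ)
    (hU : ∀ x, U x = Real.arcsin (a * (x - 1 / 2) / (p * K * C + b1)))
    (u : ℝ → ℝ → ℝ) (hu : ∀ t x, u t x = U x + V t)
    (hCeq : C = ∫ y in (0 : ℝ)..1, Real.cos (U y)) :
    (∫ x in (0 : ℝ)..1, Real.sin (U x)) = 0 ∧
      ∀ t x, x ∈ Set.Icc (0 : ℝ) 1 →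
        HasDerivAt (fun s => u s x)
          (ω x + p * K * (∫ y in (0 : ℝ)..1, Real.sin (u t y - u t x))
            + b1 * Real.sin (V t - u t x) + b0) t := by
  have hD : p * K * C + b1 ≠ 0 := by linarith
  have hUcont : Continuous U := by
    rw [funext hU]
    fun_prop
  have hmean : ∫ x in (0 : ℝ)..1, sin (U x) = 0 :=
    integral_eq_zero_of_antisymm_about_midpoint fun x => by
      rw [hU, hU, ← sin_neg, ← arcsin_neg]
      ring_nf
  refine ⟨hmean, fun t x hx => ?_⟩
  have hcoupling : ∫ y in (0 : ℝ)..1, sin (u t y - u t x) = -(C * sin (U x)) := by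
    simp_rw [hu, add_sub_add_right_eq_sub]
    rw [integral_sin_sub_const hUcont, hmean, ← hCeq]
    ring
  have hrhs : ω x + p * K * (∫ y in (0 : ℝ)..1, sin (u t y - u t x))
      + b1 * sin (V t - u t x) + b0 = V1 := by
    rw [hcoupling, hω, hb0, hu, sub_add_cancel_right, sin_neg, hU,
      sin_arcsin_mul_sub_half_div ha hbound hx]
    field_simp
    ring
  simp_rw [hrhs, hu, hV]
  simpa using (((hasDerivAt_id t).const_mul V1).add_const V0).const_add (U x)

/-- The synchronized profile U(x) = arcsin(a(x−1/2)/(pKC+b₁)) satisfies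
∫₀¹ sin U = 0, and u(t,x) = U(x) + V(t) solves the continuum-limit equation
∂u/∂t = ω(x) + pK·∫₀¹ sin(u(t,y) − u(t,x)) dy + b₁ sin(V(t) − u(t,x)) + b₀
with ω(x) = a(x − 1/2) and b₀ = V₁, provided C = ∫₀¹ cos U. -/
theorem continuum_limit_synchronized_solution
    (a p K C b1 V1 V0 b0 : ℝ)
    (ha : 0 < a) (hp : 0 < p) (hK : 0 < K) (hC : 0 < C) (hb1 : 0 < b1)
    (hbound : a / 2 ≤ p * K * C + b1) (hb0 : b0 = V1)
    (V : ℝ → ℝ) (hV : ∀ t, V t = V1 * t + V0)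
    (ω : ℝ → ℝ) (hω : ∀ x, ω x = a * (x - 1 / 2))
    (U : ℝ → ℝ)
    (hU : ∀ x, U x = Real.arcsin (a * (x - 1 / 2) / (p * K * C + b1)))
    (u : ℝ → ℝ → ℝ) (hu : ∀ t x, u t x = U x + V t)
    (hCeq : C = ∫ y in (0 : ℝ)..1, Real.cos (U y)) :
    (∫ x in (0 : ℝ)..1, Real.sin (U x)) = 0 ∧
      ∀ t x, x ∈ Set.Icc (0 : ℝ) 1 →
        HasDerivAt (fun s => u s x)
          (ω x + p * K * (∫ y in (0 : ℝ)..1, Real.sin (u t y - u t x))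
            + b1 * Real.sin (V t - u t x) + b0) t :=
  continuum_limit_synchronized_solution_general a p K C b1 V1 V0 b0 ha hbound hb0 V hV ω hω U hU u
    hu hCeq
end

section
/- Let n ≥ 2, ν > 0, p, K > 0, b_1 ∈ ℝ, and suppose C_D > 0 satisfies C_D = (1/n)·Σ_{i=1}^n √(1 − ((2i−n−1)ν/(pKC_D + b_1))²) with max_i |(2i−n−1)ν| ≤ pKC_D + b_1. Then the point ζ_i = arcsin((2i−n−1)ν/(pKC_D + b_1)), i = 1,…,n, is an equilibrium of the system v̇_i = (2i−n−1)ν + (pK/n)·Σ_{j=1}^n sin(v_j − v_i) − b_1 sin v_i. -/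
open Real Finset

/-- If C_D > 0 satisfies the self-consistency equation, then
ζ_i = arcsin((2i−n−1)ν/(pKC_D + b₁)) is an equilibrium of the controlled
Kuramoto system on the complete graph. -/
theorem arcsin_point_is_equilibrium
    (n : ℕ) (hn : 2 ≤ n) (ν p K b1 CD : ℝ)
    (hν : 0 < ν) (hp : 0 < p) (hK : 0 < K) (hCD : 0 < CD)
    (hden : 0 < p * K * CD + b1)
    (hbound : ∀ i : Fin n,
      |(2 * ((i : ℝ) + 1) - n - 1) * ν| ≤ p * K * CD + b1)
    (hself : CD = (1 / (n : ℝ)) * ∑ i : Fin n,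
      Real.sqrt (1 - ((2 * ((i : ℝ) + 1) - n - 1) * ν / (p * K * CD + b1)) ^ 2))
    (ζ : Fin n → ℝ)
    (hζ : ∀ i : Fin n,
      ζ i = Real.arcsin ((2 * ((i : ℝ) + 1) - n - 1) * ν / (p * K * CD + b1))) :
    ∀ i : Fin n,
      (2 * ((i : ℝ) + 1) - n - 1) * ν
        + (p * K / n) * ∑ j : Fin n, Real.sin (ζ j - ζ i)
        - b1 * Real.sin (ζ i) = 0 := by
  have hD0 : p * K * CD + b1 ≠ 0 := ne_of_gt hden
  have hn0 : (n : ℝ) ≠ 0 := by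
    have : 0 < n := lt_of_lt_of_le (by norm_num) hn
    positivity
  have habs : ∀ j : Fin n,
      |(2 * ((j : ℝ) + 1) - n - 1) * ν / (p * K * CD + b1)| ≤ 1 := by
    intro j
    rw [abs_div, abs_of_pos hden, div_le_one hden]
    exact hbound j
  have hsin : ∀ j : Fin n,
      Real.sin (ζ j) = (2 * ((j : ℝ) + 1) - n - 1) * ν / (p * K * CD + b1) := by
    intro j
    rw [hζ j, Real.sin_arcsin (neg_le_of_abs_le (habs j)) (le_of_abs_le (habs j))]
  have hcos : ∀ j : Fin n,
      Real.cos (ζ j) =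
        Real.sqrt (1 - ((2 * ((j : ℝ) + 1) - n - 1) * ν / (p * K * CD + b1)) ^ 2) := by
    intro j
    rw [hζ j, Real.cos_arcsin]
  -- Gauss sum over the reals
  have hgauss : ∀ m : ℕ, ∑ j ∈ Finset.range m, (j : ℝ) = m * (m - 1) / 2 := by
    intro m
    induction m with
    | zero => simp
    | succ k ih =>
      rw [Finset.sum_range_succ, ih]
      push_cast
      ring
  have hsumzero : ∑ j : Fin n, ((2 * ((j : ℝ) + 1) - n - 1) * ν) = 0 := by
    rw [Fin.sum_univ_eq_sum_range (fun j => (2 * (((j : ℕ) : ℝ) + 1) - n - 1) * ν)]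
    calc ∑ j ∈ Finset.range n, ((2 * ((j : ℝ) + 1) - n - 1) * ν)
        = ∑ j ∈ Finset.range n, (2 * ν * (j : ℝ) + (1 - n) * ν) :=
          Finset.sum_congr rfl (fun j _ => by ring)
      _ = 2 * ν * (∑ j ∈ Finset.range n, (j : ℝ)) + n * ((1 - n) * ν) := by
          rw [Finset.sum_add_distrib, ← Finset.mul_sum, Finset.sum_const,
            Finset.card_range, nsmul_eq_mul]
      _ = 0 := by rw [hgauss]; ring
  have hsumsin : ∑ j : Fin n, Real.sin (ζ j) = 0 := by
    calc ∑ j : Fin n, Real.sin (ζ j)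
        = ∑ j : Fin n, ((2 * ((j : ℝ) + 1) - n - 1) * ν) / (p * K * CD + b1) := by
          exact Finset.sum_congr rfl (fun j _ => hsin j)
      _ = (∑ j : Fin n, ((2 * ((j : ℝ) + 1) - n - 1) * ν)) / (p * K * CD + b1) := by
          rw [Finset.sum_div]
      _ = 0 := by rw [hsumzero, zero_div]
  have hsumcos : ∑ j : Fin n, Real.cos (ζ j) = n * CD := by
    rw [Finset.sum_congr rfl (fun j _ => hcos j)]
    set S := ∑ j : Fin n,
      Real.sqrt (1 - ((2 * ((j : ℝ) + 1) - n - 1) * ν / (p * K * CD + b1)) ^ 2) with hS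
    rw [hself, ← mul_assoc, mul_one_div_cancel hn0, one_mul]
  intro i
  have hexp : ∑ j : Fin n, Real.sin (ζ j - ζ i)
      = (∑ j : Fin n, Real.sin (ζ j)) * Real.cos (ζ i)
        - (∑ j : Fin n, Real.cos (ζ j)) * Real.sin (ζ i) := by
    rw [Finset.sum_congr rfl (fun j _ => Real.sin_sub (ζ j) (ζ i)),
      Finset.sum_sub_distrib, ← Finset.sum_mul, ← Finset.sum_mul]
  rw [hexp, hsumsin, hsumcos, hsin i]
  field_simp
  ring
end
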